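/- Let X be a compact metric space, f : X → X continuous, and η : ℝ/ℤ → X a continuous surjection satisfying η(2t) = f(η(t)) for all t (semiconjugating angle-doubling to f). If A₀ = η([0,1/2)) and A₁ = η([1/2,1)) are such that for every x ∈ X there is at most one i with x ∈ Aᵢ whenever x is not in η({dyadic rationals}), then for any point x whose forward orbit under f never meets A₀ ∩ A₁, the itinerary sequence ε with f^i(x) ∈ A_{εᵢ} satisfies x = η(Σ εᵢ 2^{−(i+1)}). -/
import Mathlib

private lemma coe_fract_eq (r : ℝ) : ((Int.fract r : ℝ) : UnitAddCircle) = (r : UnitAddCircle) := by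
  have h : ((Int.fract r : ℝ) : UnitAddCircle) - r = 0 := by
    rw [← AddCircle.coe_sub, AddCircle.coe_eq_zero_iff]
    refine ⟨-⌊r⌋, ?_⟩
    rw [Int.fract, zsmul_eq_mul]
    push_cast
    ring
  exact sub_eq_zero.mp h

private lemma partial_sum_eq (s : ℝ) (hs0 : 0 ≤ s) (hs1 : s < 1) (ε : ℕ → ℕ)
    (hdig : ∀ i, ε i ≤ 1)
    (hmatch : ∀ i, ε i = 0 ↔ Int.fract (2 ^ i * s) < 1 / 2) :
    ∀ n : ℕ, s - ∑ i ∈ Finset.range n, (ε i : ℝ) / 2 ^ (i + 1)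
      = Int.fract (2 ^ n * s) / 2 ^ n := by
  intro n
  induction n with
  | zero => simp [Int.fract_eq_self.mpr ⟨hs0, hs1⟩]
  | succ n ih =>
    have hf0 : 0 ≤ Int.fract (2 ^ n * s) := Int.fract_nonneg _
    have hf1 : Int.fract (2 ^ n * s) < 1 := Int.fract_lt_one _
    have h1 : Int.fract (2 ^ (n + 1) * s) = Int.fract (2 * Int.fract (2 ^ n * s)) := by
      have he : 2 ^ (n + 1) * s = 2 * Int.fract (2 ^ n * s) + ((2 * ⌊2 ^ n * s⌋ : ℤ) : ℝ) := by
        rw [Int.fract]; push_cast; ring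
      rw [he, Int.fract_add_intCast]
    have key : Int.fract (2 ^ (n + 1) * s) = 2 * Int.fract (2 ^ n * s) - (ε n : ℝ) := by
      rcases Nat.le_one_iff_eq_zero_or_eq_one.mp (hdig n) with h | h
      · have hlt := (hmatch n).mp h
        rw [h, h1, Int.fract_eq_self.mpr ⟨by linarith, by linarith⟩]
        push_cast; ring
      · have hge : ¬ Int.fract (2 ^ n * s) < 1 / 2 := fun hc => by
          have := (hmatch n).mpr hc; omega
        push_neg at hge
        have h2 : Int.fract (2 * Int.fract (2 ^ n * s))
            = Int.fract (2 * Int.fract (2 ^ n * s) - ((1 : ℤ) : ℝ)) := by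
          rw [Int.fract_sub_intCast]
        rw [h, h1, h2, Int.fract_eq_self.mpr ⟨by push_cast; linarith, by push_cast; linarith⟩]
        push_cast; ring
    rw [Finset.sum_range_succ, sub_add_eq_sub_sub, ih, key]
    ring

private lemma tsum_digits (s : ℝ) (hs0 : 0 ≤ s) (hs1 : s < 1) (ε : ℕ → ℕ)
    (hdig : ∀ i, ε i ≤ 1)
    (hmatch : ∀ i, ε i = 0 ↔ Int.fract (2 ^ i * s) < 1 / 2) :
    (∑' i : ℕ, ((ε i : ℝ)) / 2 ^ (i + 1)) = s := by
  have hps := partial_sum_eq s hs0 hs1 ε hdig hmatch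
  have hsum : HasSum (fun i : ℕ => (ε i : ℝ) / 2 ^ (i + 1)) s := by
    rw [hasSum_iff_tendsto_nat_of_nonneg (fun i => by positivity)]
    have hlow : Filter.Tendsto (fun n : ℕ => s - (1 / 2 : ℝ) ^ n) Filter.atTop (nhds s) := by
      have h2 : Filter.Tendsto (fun n : ℕ => ((1 : ℝ) / 2) ^ n) Filter.atTop (nhds 0) :=
        tendsto_pow_atTop_nhds_zero_of_lt_one (by norm_num) (by norm_num)
      simpa using h2.const_sub s
    refine tendsto_of_tendsto_of_tendsto_of_le_of_le hlow tendsto_const_nhds ?_ ?_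
    · intro n
      have := hps n
      have hle : Int.fract (2 ^ n * s) / 2 ^ n ≤ (1 / 2 : ℝ) ^ n := by
        rw [div_pow, one_pow, div_le_div_iff₀ (by positivity) (by positivity)]
        nlinarith [Int.fract_lt_one (2 ^ n * s), (by positivity : (0:ℝ) < (2:ℝ) ^ n)]
      linarith
    · intro n
      have := hps n
      have h0 : 0 ≤ Int.fract (2 ^ n * s) / 2 ^ n := div_nonneg (Int.fract_nonneg _) (by positivity)
      linarith
  exact hsum.tsum_eq

/-- Semiconjugacy of the doubling map to `f` via a Carathéodory-type loop `η`:
if the forward orbit of `x` avoids the overlap `A₀ ∩ A₁`, then the itinerary of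
`x` gives the binary digits of an angle `t` with `x = η(t)`. -/
theorem itinerary_recovers_point
    {X : Type*} [MetricSpace X] [CompactSpace X]
    (f : X → X) (hf : Continuous f)
    (η : UnitAddCircle → X) (hη : Continuous η) (hηsurj : Function.Surjective η)
    (hsemi : ∀ t : UnitAddCircle, η ((2 : ℕ) • t) = f (η t))
    (A₀ A₁ : Set X)
    (hA₀ : A₀ = η '' ((fun r : ℝ => (r : UnitAddCircle)) '' Set.Ico (0 : ℝ) (1 / 2)))
    (hA₁ : A₁ = η '' ((fun r : ℝ => (r : UnitAddCircle)) '' Set.Ico (1 / 2 : ℝ) 1))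
    (hsep : ∀ x : X, x ∈ A₀ ∩ A₁ →
      x ∈ η '' {t : UnitAddCircle | ∃ (k : ℤ) (n : ℕ), t = ((k / 2 ^ n : ℝ) : UnitAddCircle)})
    (x : X) (horb : ∀ n : ℕ, f^[n] x ∉ A₀ ∩ A₁)
    (ε : ℕ → ℕ) (hdig : ∀ i, ε i ≤ 1)
    (hitin : ∀ i : ℕ, f^[i] x ∈ (if ε i = 0 then A₀ else A₁)) :
    x = η ((∑' i : ℕ, ((ε i : ℝ)) / 2 ^ (i + 1) : ℝ)) := by
  obtain ⟨t, ht⟩ := hηsurj x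
  obtain ⟨r, rfl⟩ := QuotientAddGroup.mk_surjective t
  set s : ℝ := Int.fract r with hsdef
  have hs0 : 0 ≤ s := Int.fract_nonneg r
  have hs1 : s < 1 := Int.fract_lt_one r
  have hst : ((s : ℝ) : UnitAddCircle) = ((r : ℝ) : UnitAddCircle) := coe_fract_eq r
  have hxs : x = η ((s : ℝ) : UnitAddCircle) := by rw [hst]; exact ht.symm
  -- iterate formula
  have hiter : ∀ i : ℕ, f^[i] x = η (((Int.fract (2 ^ i * s) : ℝ) : UnitAddCircle)) := by
    intro i
    have hsm : ∀ (n : ℕ) (u : UnitAddCircle), f^[n] (η u) = η ((2 ^ n : ℕ) • u) := by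
      intro n
      induction n with
      | zero => intro u; simp
      | succ n ihn =>
        intro u
        rw [Function.iterate_succ_apply', ihn u, ← hsemi, ← mul_nsmul, pow_succ]
    rw [hxs, hsm i, ← AddCircle.coe_nsmul, nsmul_eq_mul, coe_fract_eq]
    push_cast
    ring_nf
  -- membership according to fract
  have hmemb : ∀ i : ℕ,
      (Int.fract (2 ^ i * s) < 1 / 2 → f^[i] x ∈ A₀)
      ∧ (¬ Int.fract (2 ^ i * s) < 1 / 2 → f^[i] x ∈ A₁) := by
    intro i
    constructor
    · intro hlt
      rw [hA₀, hiter i]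
      exact ⟨_, ⟨Int.fract (2 ^ i * s), ⟨Int.fract_nonneg _, hlt⟩, rfl⟩, rfl⟩
    · intro hge
      push_neg at hge
      rw [hA₁, hiter i]
      exact ⟨_, ⟨Int.fract (2 ^ i * s), ⟨hge, Int.fract_lt_one _⟩, rfl⟩, rfl⟩
  have hmatch : ∀ i, ε i = 0 ↔ Int.fract (2 ^ i * s) < 1 / 2 := by
    intro i
    constructor
    · intro h0
      by_contra hge
      have h1 : f^[i] x ∈ A₀ := by have := hitin i; rwa [if_pos h0] at this
      exact horb i ⟨h1, (hmemb i).2 hge⟩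
    · intro hlt
      by_contra h0
      have h1 : f^[i] x ∈ A₁ := by have := hitin i; rwa [if_neg h0] at this
      exact horb i ⟨(hmemb i).1 hlt, h1⟩
  rw [tsum_digits s hs0 hs1 ε hdig hmatch]
  exact hxs
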